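/- Fix 0 < q ≤ 1/2 and ε ∈ (0,1). Let f : ℝ → [0,∞) be smooth with f(t) = 0 for t ≤ 0, f strictly increasing on [0,∞), and f(t) = (ε^{1-q}/|log ε|²) t for t ≥ 1. Let F' be the inverse of f on [0,∞) and F(x) = ∫_0^x F'(s) ds. Then: (1) F' : [0,∞) → [0,∞) is bijective with F'' > 0; (2) s F'(s) − 2F(s) ≤ C ε^{1-q}/|log ε|² for all s ≥ 0; (3) F(s) ≤ C s for 0 ≤ s ≤ ε^{1-q}/|log ε|²; (4) F'(s) = |log ε|² ε^{q-1} s for s ≥ ε^{1-q}/|log ε|². All constants C are independent of ε. -/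

import Mathlib

open Real Set intervalIntegral

/-- Properties of the penalty function `F` built from a vorticity
function `f`: with `a = ε^{1-q}/(log ε)²`, the inverse `F'` of `f` on `[0,∞)` and its
primitive `F` satisfy: (1) `F' : [0,∞) → [0,∞)` is bijective with `F'' > 0`;
(2) `s F'(s) - 2 F(s) ≤ C a`; (3) `F(s) ≤ C s` for `0 ≤ s ≤ a`;
(4) `F'(s) = a⁻¹ s = (log ε)² ε^{q-1} s` for `s ≥ a`; with `C` independent of `ε`. -/
theorem stmt8 :
    ∃ C : ℝ, 0 < C ∧
      ∀ (ε q : ℝ), 0 < ε → ε < 1 → 0 < q → q ≤ 1/2 →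
      ∀ (f F' : ℝ → ℝ),
        ContDiff ℝ (⊤ : ℕ∞) f →
        (∀ t, 0 ≤ f t) →
        (∀ t ≤ (0 : ℝ), f t = 0) →
        StrictMonoOn f (Set.Ici 0) →
        (∀ t > (0 : ℝ), 0 < deriv f t) →
        (∀ t ≥ (1 : ℝ), f t = ε ^ (1 - q) / (Real.log ε) ^ 2 * t) →
        (∀ s ≥ (0 : ℝ), 0 ≤ F' s ∧ f (F' s) = s) →
        -- `F` is the primitive of `F'`
        (let F : ℝ → ℝ := fun x => ∫ t in (0 : ℝ)..x, F' t
         Set.BijOn F' (Set.Ici 0) (Set.Ici 0) ∧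
         (∀ s > (0 : ℝ), 0 < deriv F' s) ∧
         (∀ s ≥ (0 : ℝ), s * F' s - 2 * F s ≤ C * (ε ^ (1 - q) / (Real.log ε) ^ 2)) ∧
         (∀ s, 0 ≤ s → s ≤ ε ^ (1 - q) / (Real.log ε) ^ 2 → F s ≤ C * s) ∧
         (∀ s, s ≥ ε ^ (1 - q) / (Real.log ε) ^ 2 →
            F' s = (Real.log ε) ^ 2 * ε ^ (q - 1) * s)) := by
  refine ⟨1, one_pos, ?_⟩
  intro ε q hε hε1 hq hq2 f F' hfC hfnn hf0 hfmono hfderiv hflin hF'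
  intro F
  set a : ℝ := ε ^ (1 - q) / (Real.log ε) ^ 2 with ha_def
  have hlog : Real.log ε < 0 := Real.log_neg hε hε1
  have hlog2 : 0 < Real.log ε ^ 2 := by nlinarith
  have ha : 0 < a := div_pos (Real.rpow_pos_of_pos hε _) hlog2
  have hf00 : f 0 = 0 := hf0 0 le_rfl
  have hfinj : Set.InjOn f (Set.Ici 0) := hfmono.injOn
  -- F' is a left inverse of f on [0,∞)
  have hF'inv : ∀ t : ℝ, 0 ≤ t → F' (f t) = t := by
    intro t ht
    have h1 := hF' (f t) (hfnn t)
    exact hfinj h1.1 ht h1.2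
  -- F' is strictly monotone on [0,∞)
  have hF'mono : StrictMonoOn F' (Set.Ici 0) := by
    intro s1 h1 s2 h2 h12
    by_contra h
    push_neg at h
    have e1 := hF' s1 h1
    have e2 := hF' s2 h2
    have : f (F' s2) ≤ f (F' s1) := hfmono.monotoneOn e2.1 e1.1 h
    rw [e1.2, e2.2] at this
    linarith
  have hfone : f 1 = a := by
    have := hflin 1 le_rfl
    simpa using this
  -- explicit formula on [a, ∞)
  have hbig : ∀ s : ℝ, a ≤ s → F' s = s / a := by
    intro s hs
    have h1le : (1 : ℝ) ≤ s / a := (one_le_div ha).2 hs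
    have hfs : f (s / a) = s := by
      rw [hflin _ h1le]
      field_simp
    calc F' s = F' (f (s / a)) := by rw [hfs]
      _ = s / a := hF'inv _ (by linarith)
  -- bound F' ≤ 1 on [0, a]
  have hF'le1 : ∀ s : ℝ, 0 ≤ s → s ≤ a → F' s ≤ 1 := by
    intro s h0 hsa
    have e := hF' s h0
    by_contra h
    push_neg at h
    have h1 : f 1 < f (F' s) := hfmono (by norm_num) e.1 h
    rw [hfone, e.2] at h1
    linarith
  -- integrability of F' on nonnegative intervals
  have hint : ∀ u v : ℝ, 0 ≤ u → 0 ≤ v → IntervalIntegrable F' MeasureTheory.volume u v := by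
    intro u v hu hv
    apply MonotoneOn.intervalIntegrable
    apply hF'mono.monotoneOn.mono
    intro x hx
    rcases Set.mem_uIcc.1 hx with ⟨h1, _⟩ | ⟨h1, _⟩
    · exact le_trans hu h1
    · exact le_trans hv h1
  have hFnn : ∀ s : ℝ, 0 ≤ s → 0 ≤ F s := by
    intro s hs
    apply intervalIntegral.integral_nonneg hs
    intro t ht
    exact (hF' t ht.1).1
  have hFle : ∀ s : ℝ, 0 ≤ s → s ≤ a → F s ≤ s := by
    intro s h0 hsa
    have h1 : F s ≤ ∫ _ in (0 : ℝ)..s, (1 : ℝ) := by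
      apply intervalIntegral.integral_mono_on h0 (hint 0 s le_rfl h0)
        intervalIntegrable_const
      intro t ht
      exact hF'le1 t ht.1 (le_trans ht.2 hsa)
    simpa using h1
  -- formula for F on [a, ∞)
  have hFbig : ∀ s : ℝ, a ≤ s → F s = F a + (s ^ 2 - a ^ 2) / (2 * a) := by
    intro s hs
    have h0s : 0 ≤ s := le_trans ha.le hs
    have hsplit : (∫ t in (0 : ℝ)..a, F' t) + ∫ t in a..s, F' t = F s :=
      intervalIntegral.integral_add_adjacent_intervals (hint 0 a le_rfl ha.le)
        (hint a s ha.le h0s)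
    have hcongr : (∫ t in a..s, F' t) = ∫ t in a..s, t / a := by
      apply intervalIntegral.integral_congr
      intro t ht
      rw [Set.uIcc_of_le hs] at ht
      exact hbig t ht.1
    have hval : (∫ t in a..s, t / a) = (s ^ 2 - a ^ 2) / (2 * a) := by
      rw [intervalIntegral.integral_div, integral_id]
      ring
    have : F s = F a + ∫ t in a..s, F' t := by
      rw [← hsplit]
    rw [this, hcongr, hval]
  refine ⟨?_, ?_, ?_, ?_, ?_⟩
  · -- BijOn
    refine ⟨fun s hs => (hF' s hs).1, fun s1 h1 s2 h2 he => ?_, fun t ht => ?_⟩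
    · rw [← (hF' s1 h1).2, ← (hF' s2 h2).2, he]
    · exact ⟨f t, hfnn t, hF'inv t ht⟩
  · -- positivity of deriv F'
    intro s hs
    have hFs := hF' s hs.le
    have ht0 : 0 < F' s := by
      rcases lt_or_eq_of_le hFs.1 with h | h
      · exact h
      · exfalso
        have h2 := hFs.2
        rw [← h, hf00] at h2
        linarith
    have hcont : ContinuousAt F' s := by
      have hmono' : StrictMonoOn F' (Set.Ioi 0) :=
        hF'mono.mono Set.Ioi_subset_Ici_self
      apply hmono'.continuousAt_of_image_mem_nhds (Ioi_mem_nhds hs)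
      have hsub : Set.Ioi (0 : ℝ) ⊆ F' '' Set.Ioi 0 := by
        intro t ht
        have hft : 0 < f t := by
          have := hfmono (Set.mem_Ici.2 le_rfl) (Set.mem_Ici.2 (le_of_lt ht)) ht
          rwa [hf00] at this
        exact ⟨f t, hft, hF'inv t (le_of_lt ht)⟩
      exact Filter.mem_of_superset (Ioi_mem_nhds ht0) hsub
    have hfd : HasDerivAt f (deriv f (F' s)) (F' s) :=
      ((hfC.differentiable (by simp)) (F' s)).hasDerivAt
    have hne : deriv f (F' s) ≠ 0 := (hfderiv _ ht0).ne'
    have hloc : ∀ᶠ y in nhds s, f (F' y) = y := by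
      filter_upwards [Ioi_mem_nhds hs] with y hy
      exact (hF' y (le_of_lt hy)).2
    have hD : HasDerivAt F' (deriv f (F' s))⁻¹ s :=
      HasDerivAt.of_local_left_inverse hcont hfd hne hloc
    rw [hD.deriv]
    exact inv_pos.2 (hfderiv _ ht0)
  · -- s F'(s) - 2 F(s) ≤ a
    intro s hs
    rw [one_mul]
    rcases le_or_gt s a with h | h
    · have h1 := hF'le1 s hs h
      have h2 : s * F' s ≤ s * 1 := mul_le_mul_of_nonneg_left h1 hs
      have h3 := hFnn s hs
      nlinarith
    · rw [hbig s h.le, hFbig s h.le]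
      have hFa := hFnn a ha.le
      have heq : s * (s / a) - 2 * (F a + (s ^ 2 - a ^ 2) / (2 * a)) = a - 2 * F a := by
        field_simp
        ring
      rw [heq]
      linarith
  · -- F s ≤ s on [0, a]
    intro s h0 hsa
    rw [one_mul]
    exact hFle s h0 hsa
  · -- explicit formula
    intro s hs
    rw [hbig s hs, ha_def]
    have hrp : ε ^ (q - 1) = (ε ^ (1 - q))⁻¹ := by
      rw [← Real.rpow_neg hε.le]
      norm_num
    rw [hrp]
    have hεp : (0 : ℝ) < ε ^ (1 - q) := Real.rpow_pos_of_pos hε _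
    field_simp
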